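/- Let (f,M) be a polymatroid, let F1,F2 be flats of (f,M) generating the modular cut 𝓜=𝓜(F1,F2), let S=F1∩F2, and assume S∉𝓜 and δ(F1,F2)=δ(𝓜)>0. Then there is a two-point extension (f2, M∪{u,v}) of (f,M) (with u,v∉M distinct) that is Ingleton-violating on this configuration: Ing_{f2}(F1,F2;{u},{v}|S) < 0. -/

import Mathlib

open scoped Classical

/-- A polymatroid on the finite ground set `M`: `f` is zero on the empty set,
nonnegative, monotone and submodular on subsets of `M`. -/
def IsPolymatroid {α : Type*} [DecidableEq α] (M : Finset α) (f : Finset α → ℝ) : Prop :=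
  f ∅ = 0 ∧
  (∀ A, A ⊆ M → 0 ≤ f A) ∧
  (∀ A B, A ⊆ B → B ⊆ M → f A ≤ f B) ∧
  (∀ A B, A ⊆ M → B ⊆ M → f (A ∪ B) + f (A ∩ B) ≤ f A + f B)

/-- `F` is a flat of the polymatroid `(f, M)`: every proper superset inside `M`
has strictly larger rank. -/
def IsFlat {α : Type*} [DecidableEq α] (M : Finset α) (f : Finset α → ℝ) (F : Finset α) : Prop :=
  F ⊆ M ∧ ∀ G, F ⊂ G → G ⊆ M → f F < f G

/-- The modular defect of a pair of subsets. -/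
def modularDefect {α : Type*} [DecidableEq α] (f : Finset α → ℝ) (A B : Finset α) : ℝ :=
  f A + f B - f (A ∩ B) - f (A ∪ B)

/-- A modular cut: a collection of flats, closed upwards among flats,
and closed under intersections of modular pairs. -/
def IsModularCut {α : Type*} [DecidableEq α] (M : Finset α) (f : Finset α → ℝ)
    (𝓜 : Set (Finset α)) : Prop :=
  (∀ F ∈ 𝓜, IsFlat M f F) ∧
  (∀ F₁ ∈ 𝓜, ∀ F₂, IsFlat M f F₂ → F₁ ⊆ F₂ → F₂ ∈ 𝓜) ∧
  (∀ F₁ ∈ 𝓜, ∀ F₂ ∈ 𝓜, modularDefect f F₁ F₂ = 0 → F₁ ∩ F₂ ∈ 𝓜)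

/-- A modular cut is principal if it is empty or the intersection of all of its
elements (taken inside the ground set `M`) is one of its elements. -/
def IsPrincipal {α : Type*} [DecidableEq α] (M : Finset α) (𝓜 : Set (Finset α)) : Prop :=
  𝓜 = ∅ ∨ (M.filter fun x => ∀ F ∈ 𝓜, x ∈ F) ∈ 𝓜

/-- `(g, N)` is an extension of the polymatroid `(f, M)`. -/
def IsExtension {α : Type*} [DecidableEq α] (M : Finset α) (f : Finset α → ℝ)
    (N : Finset α) (g : Finset α → ℝ) : Prop :=
  M ⊆ N ∧ IsPolymatroid N g ∧ ∀ A, A ⊆ M → g A = f A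

/-- `h` is an amalgam of the two extensions `(g₁, N₁)` and `(g₂, N₂)`. -/
def IsAmalgam {α : Type*} [DecidableEq α] (N₁ : Finset α) (g₁ : Finset α → ℝ)
    (N₂ : Finset α) (g₂ : Finset α → ℝ) (h : Finset α → ℝ) : Prop :=
  IsPolymatroid (N₁ ∪ N₂) h ∧ (∀ A, A ⊆ N₁ → h A = g₁ A) ∧ (∀ A, A ⊆ N₂ → h A = g₂ A)

/-- A polymatroid is sticky if every two extensions intersecting exactly
in the ground set have an amalgam. -/
def Sticky {α : Type*} [DecidableEq α] (M : Finset α) (f : Finset α → ℝ) : Prop :=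
  ∀ N₁ g₁ N₂ g₂, IsExtension M f N₁ g₁ → IsExtension M f N₂ g₂ → N₁ ∩ N₂ = M →
    ∃ h, IsAmalgam N₁ g₁ N₂ g₂ h

/-- `f(I,J|K) = f(I∪K) + f(J∪K) - f(K) - f(I∪J∪K)`. -/
def condMI {α : Type*} [DecidableEq α] (f : Finset α → ℝ) (I J K : Finset α) : ℝ :=
  f (I ∪ K) + f (J ∪ K) - f K - f (I ∪ J ∪ K)

/-- `f(Y|A) = f(Y∪A) - f(A)`. -/
def condRk {α : Type*} [DecidableEq α] (f : Finset α → ℝ) (Y A : Finset α) : ℝ :=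
  f (Y ∪ A) - f A

/-- The common information expression `Comm(A,B;Y)`. -/
def commExpr {α : Type*} [DecidableEq α] (f : Finset α → ℝ) (A B Y : Finset α) : ℝ :=
  condMI f A B Y + condRk f Y A + condRk f Y B + condRk f Y (A ∪ B)

/-- The Ingleton expression `Ing(A,B;P,Q)`. -/
def ingExpr {α : Type*} [DecidableEq α] (f : Finset α → ℝ) (A B P Q : Finset α) : ℝ :=
  -(f A + f B - f (A ∪ B)) + condMI f A B P + condMI f A B Q + (f P + f Q - f (P ∪ Q))

/-- The conditional common information expression `Comm(A,B;Y|E)`. -/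
def commExprCond {α : Type*} [DecidableEq α] (f : Finset α → ℝ) (A B Y E : Finset α) : ℝ :=
  condMI f A B (Y ∪ E) + condRk f Y (A ∪ E) + condRk f Y (B ∪ E) + condRk f Y (A ∪ B ∪ E)

/-- The conditional Ingleton expression `Ing(A,B;P,Q|E)`. -/
def ingExprCond {α : Type*} [DecidableEq α] (f : Finset α → ℝ) (A B P Q E : Finset α) : ℝ :=
  -condMI f A B E + condMI f A B (P ∪ E) + condMI f A B (Q ∪ E) + condMI f P Q E

/-!
Adjoin a point `p` with `rank (X ∪ {p}) = ρ X`, the largest value allowed if `p` lies at most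
`δ = δ(F₁, F₂)` above `S = F₁ ∩ F₂` and is spanned by `S ∪ F` for every `F ∈ 𝓜`. Minimality of `δ`
among the defects of `𝓜` is exactly what makes `ρ` submodular, and it forces every member of `𝓜`
containing `S` to have rank more than `f S + δ`. Hence `ρ S = f S + δ`, while `ρ = f` on `F₁`, `F₂`
and `F₁ ∪ F₂`: conditioning on `p` destroys the mutual information `δ` of `F₁` and `F₂` over `S`.
Take two copies `u`, `v` of `p`; since `f X + ρ S < 2 ρ X` for every `X`, the pair `{u, v}` can be
given a rank making `f₂(u, v | S) = δ - ε` with `ε > 0`, and then `Ing = -δ + 0 + 0 + (δ - ε) = -ε`.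
-/

section

variable {α : Type*} [DecidableEq α] {M : Finset α} {f : Finset α → ℝ}

namespace IsPolymatroid

variable (hf : IsPolymatroid M f)
include hf

theorem nonneg {A : Finset α} (hA : A ⊆ M) : 0 ≤ f A := hf.2.1 A hA

theorem mono {A B : Finset α} (hAB : A ⊆ B) (hB : B ⊆ M) : f A ≤ f B := hf.2.2.1 A B hAB hB

theorem submod {A B : Finset α} (hA : A ⊆ M) (hB : B ⊆ M) :
    f (A ∪ B) + f (A ∩ B) ≤ f A + f B :=
  hf.2.2.2 A B hA hB

theorem submod_of_subset_inter {A B Z : Finset α} (hA : A ⊆ M) (hB : B ⊆ M)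
    (hZ : Z ⊆ A ∩ B) : f (A ∪ B) + f Z ≤ f A + f B := by
  have := hf.mono hZ (Finset.inter_subset_left.trans hA)
  linarith [hf.submod hA hB]

theorem rank_union_eq_of_forall_rank_insert_eq {X : Finset α} (hX : X ⊆ M) {Y : Finset α}
    (hY : ∀ y ∈ Y, y ∈ M ∧ f (insert y X) = f X) : f (X ∪ Y) = f X := by
  induction Y using Finset.induction_on with
  | empty => simp
  | @insert y Y _ ih =>
    obtain ⟨hyM, hy⟩ := hY y (Finset.mem_insert_self y Y)
    have hXY := ih fun z hz => hY z (Finset.mem_insert_of_mem hz)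
    have hXyYM : X ∪ insert y Y ⊆ M := Finset.union_subset hX fun z hz => (hY z hz).1
    have hunion : X ∪ insert y Y = (X ∪ Y) ∪ insert y X := by
      ext z; simp only [Finset.mem_union, Finset.mem_insert]; tauto
    have hXYM : X ∪ Y ⊆ M :=
      (Finset.union_subset_union_right (Finset.subset_insert y Y)).trans hXyYM
    have hsub := hf.submod_of_subset_inter hXYM (Finset.insert_subset hyM hX)
      (Finset.subset_inter Finset.subset_union_left (Finset.subset_insert y X))
    have hge := hf.mono Finset.subset_union_left hXyYM
    rw [hunion] at hge ⊢
    linarith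

end IsPolymatroid

theorem IsFlat.subset_of_rank_union_le {G X : Finset α} (hG : IsFlat M f G) (hX : X ⊆ M)
    (hle : f (X ∪ G) ≤ f G) : X ⊆ G := by
  by_contra hXG
  have hss : G ⊂ X ∪ G := Finset.ssubset_iff_subset_ne.2
    ⟨Finset.subset_union_right, fun h => hXG (h ▸ Finset.subset_union_left)⟩
  linarith [hG.2 _ hss (Finset.union_subset hX hG.1)]

noncomputable def rankClosure (M : Finset α) (f : Finset α → ℝ) (X : Finset α) : Finset α :=
  X ∪ M.filter fun y => f (insert y X) = f X

theorem subset_rankClosure (X : Finset α) : X ⊆ rankClosure M f X := Finset.subset_union_left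

theorem rankClosure_subset {X : Finset α} (hX : X ⊆ M) : rankClosure M f X ⊆ M :=
  Finset.union_subset hX (Finset.filter_subset _ _)

theorem IsPolymatroid.rank_rankClosure (hf : IsPolymatroid M f) {X : Finset α} (hX : X ⊆ M) :
    f (rankClosure M f X) = f X :=
  hf.rank_union_eq_of_forall_rank_insert_eq hX fun _ hy => Finset.mem_filter.1 hy

theorem IsPolymatroid.isFlat_rankClosure (hf : IsPolymatroid M f) {X : Finset α} (hX : X ⊆ M) :
    IsFlat M f (rankClosure M f X) := by
  refine ⟨rankClosure_subset hX, fun G hG hGM => ?_⟩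
  obtain ⟨y, hyG, hy⟩ := Finset.exists_of_ssubset hG
  have hyM := hGM hyG
  have hlt : f X < f (insert y X) := (hf.mono (Finset.subset_insert y X)
    (Finset.insert_subset hyM hX)).lt_of_ne fun h =>
      hy (Finset.mem_union_right _ (Finset.mem_filter.2 ⟨hyM, h.symm⟩))
  have := hf.mono (Finset.insert_subset hyG ((subset_rankClosure X).trans hG.1)) hGM
  rw [hf.rank_rankClosure hX]
  linarith

namespace IsModularCut

variable {𝓜 : Set (Finset α)} (h𝓜 : IsModularCut M f 𝓜)
include h𝓜

theorem subset_ground {F : Finset α} (hF : F ∈ 𝓜) : F ⊆ M := (h𝓜.1 F hF).1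

theorem exists_mem_superset_rank_eq (hf : IsPolymatroid M f) {F T : Finset α} (hF : F ∈ 𝓜)
    (hFT : F ⊆ T) (hT : T ⊆ M) : ∃ W ∈ 𝓜, T ⊆ W ∧ f W = f T :=
  ⟨rankClosure M f T, h𝓜.2.1 F hF _ (hf.isFlat_rankClosure hT) (hFT.trans (subset_rankClosure T)),
    subset_rankClosure T, hf.rank_rankClosure hT⟩

variable {d : ℝ} (hd : ∀ G₁ ∈ 𝓜, ∀ G₂ ∈ 𝓜, G₁ ∩ G₂ ∉ 𝓜 → d ≤ modularDefect f G₁ G₂)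
include hd

theorem rank_inter_add_lt {G₁ G₂ : Finset α} (hG₁ : G₁ ∈ 𝓜) (hG₂ : G₂ ∈ 𝓜)
    (hG : G₁ ∩ G₂ ∉ 𝓜) : f (G₁ ∩ G₂) + d < f G₁ := by
  by_contra! hle
  have := hd G₁ hG₁ G₂ hG₂ hG
  rw [modularDefect] at this
  have hsub := (h𝓜.1 G₂ hG₂).subset_of_rank_union_le (h𝓜.subset_ground hG₁) (by linarith)
  exact hG (by rwa [Finset.inter_eq_left.2 hsub])

theorem rank_add_lt_of_inter_subset (hf : IsPolymatroid M f) {F₁ F₂ W : Finset α}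
    (hF₁ : F₁ ∈ 𝓜) (hF₂ : F₂ ∈ 𝓜) (hS : F₁ ∩ F₂ ∉ 𝓜) (hW : W ∈ 𝓜) (hSW : F₁ ∩ F₂ ⊆ W) :
    f (F₁ ∩ F₂) + d < f W := by
  have hWM := h𝓜.subset_ground hW
  by_cases hWF₁ : W ∩ F₁ ∈ 𝓜
  · have hmeet : W ∩ F₁ ∩ F₂ = F₁ ∩ F₂ := by
      rw [Finset.inter_assoc]; exact Finset.inter_eq_right.2 hSW
    have := h𝓜.rank_inter_add_lt hd hWF₁ hF₂ (hmeet ▸ hS)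
    rw [hmeet] at this
    linarith [hf.mono Finset.inter_subset_left hWM (A := W ∩ F₁)]
  · have := h𝓜.rank_inter_add_lt hd hW hF₁ hWF₁
    have hSWF₁ : F₁ ∩ F₂ ⊆ W ∩ F₁ := Finset.subset_inter hSW Finset.inter_subset_left
    linarith [hf.mono hSWF₁ (Finset.inter_subset_left.trans hWM)]

end IsModularCut

noncomputable def cutFamily (M : Finset α) (𝓜 : Set (Finset α)) : Finset (Finset α) :=
  M.powerset.filter (· ∈ 𝓜)

/-- The rank of `X ∪ {p}` for the freest new point `p` which lies at most `d` above `S` and is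
spanned by `S ∪ F` for every `F ∈ 𝓜`. -/
noncomputable def cutExtRank (M : Finset α) (f : Finset α → ℝ) (𝓜 : Set (Finset α))
    (S : Finset α) (d : ℝ) (hne : (cutFamily M 𝓜).Nonempty) (X : Finset α) : ℝ :=
  min (f (X ∪ S) + d) ((cutFamily M 𝓜).inf' hne fun F => f (X ∪ S ∪ F))

namespace cutExtRank

variable {𝓜 : Set (Finset α)} {S : Finset α} {d : ℝ} {hne : (cutFamily M 𝓜).Nonempty}
  (hf : IsPolymatroid M f) (h𝓜 : IsModularCut M f 𝓜) (hS : S ⊆ M)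

local notation "ρ" => cutExtRank M f 𝓜 S d hne

include hf

theorem le_add {X T : Finset α} (hXT : X ∪ S ⊆ T) (hT : T ⊆ M) : ρ X ≤ f T + d :=
  (min_le_left _ _).trans (by linarith [hf.mono hXT hT])

include h𝓜

theorem le_of_mem {X F T : Finset α} (hF : F ∈ 𝓜) (hXT : X ∪ S ⊆ T) (hFT : F ⊆ T)
    (hT : T ⊆ M) : ρ X ≤ f T := by
  have hF' : F ∈ cutFamily M 𝓜 :=
    Finset.mem_filter.2 ⟨Finset.mem_powerset.2 (h𝓜.subset_ground hF), hF⟩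
  exact (min_le_right _ _).trans <|
    (Finset.inf'_le _ hF').trans (hf.mono (Finset.union_subset hXT hFT) hT)

/-- This is where the bound on `d` is needed: if `V ∩ W` leaves the cut, the `d` missing from the
bound on `ρ (X ∩ Y)` is paid for by `δ(V, W)`. -/
theorem submod_of_mem (hd : ∀ G₁ ∈ 𝓜, ∀ G₂ ∈ 𝓜, G₁ ∩ G₂ ∉ 𝓜 → d ≤ modularDefect f G₁ G₂)
    {X Y V W : Finset α} (hV : V ∈ 𝓜) (hXV : X ∪ S ⊆ V) (hρX : ρ X = f V)
    (hW : W ∈ 𝓜) (hYW : Y ∪ S ⊆ W) (hρY : ρ Y = f W) :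
    ρ (X ∪ Y) + ρ (X ∩ Y) ≤ ρ X + ρ Y := by
  have hVM := h𝓜.subset_ground hV
  have hWM := h𝓜.subset_ground hW
  have hVW : X ∩ Y ∪ S ⊆ V ∩ W := Finset.subset_inter
    ((Finset.union_subset_union_left Finset.inter_subset_left).trans hXV)
    ((Finset.union_subset_union_left Finset.inter_subset_right).trans hYW)
  have hunion : ρ (X ∪ Y) ≤ f (V ∪ W) :=
    le_of_mem hf h𝓜 hV ((Finset.union_union_distrib_right X Y S).trans_subset
      (Finset.union_subset_union hXV hYW)) Finset.subset_union_left (Finset.union_subset hVM hWM)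
  have hsub := hf.submod hVM hWM
  have hVWM : V ∩ W ⊆ M := Finset.inter_subset_left.trans hVM
  by_cases hmeet : V ∩ W ∈ 𝓜
  · have hinter : ρ (X ∩ Y) ≤ f (V ∩ W) := le_of_mem hf h𝓜 hmeet hVW le_rfl hVWM
    linarith
  · have hinter : ρ (X ∩ Y) ≤ f (V ∩ W) + d := le_add hf hVW hVWM
    have := hd V hV W hW hmeet
    rw [modularDefect] at this
    linarith

include hS

variable (d hne) in
theorem eq_add_or_exists_mem {X : Finset α} (hX : X ⊆ M) :
    ρ X = f (X ∪ S) + d ∨ ∃ W ∈ 𝓜, X ∪ S ⊆ W ∧ ρ X = f W := by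
  refine (min_choice _ _).imp id fun h => ?_
  obtain ⟨F, hF, hρ⟩ := Finset.exists_mem_eq_inf' hne fun F => f (X ∪ S ∪ F)
  obtain ⟨hFM, hF𝓜⟩ := Finset.mem_filter.1 hF
  obtain ⟨W, hW, hXW, hfW⟩ := h𝓜.exists_mem_superset_rank_eq hf hF𝓜 Finset.subset_union_right
    (Finset.union_subset (Finset.union_subset hX hS) (Finset.mem_powerset.1 hFM))
  exact ⟨W, hW, Finset.subset_union_left.trans hXW, by rw [cutExtRank, h, hρ, hfW]⟩

theorem rank_le {X : Finset α} (hd : 0 ≤ d) (hX : X ⊆ M) : f X ≤ ρ X := by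
  rcases eq_add_or_exists_mem d hne hf h𝓜 hS hX with h | ⟨W, hW, hXW, h⟩
  · linarith [hf.mono Finset.subset_union_left (Finset.union_subset hX hS) (A := X)]
  · exact h ▸ hf.mono (Finset.subset_union_left.trans hXW) (h𝓜.subset_ground hW)

theorem mono {X Y : Finset α} (hXY : X ⊆ Y) (hY : Y ⊆ M) : ρ X ≤ ρ Y := by
  rcases eq_add_or_exists_mem d hne hf h𝓜 hS hY with h | ⟨W, hW, hYW, h⟩
  · exact h ▸ le_add hf (Finset.union_subset_union_left hXY) (Finset.union_subset hY hS)
  · exact h ▸ le_of_mem hf h𝓜 hW ((Finset.union_subset_union_left hXY).trans hYW) le_rfl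
      (h𝓜.subset_ground hW)

theorem union_add_rank_inter_le {X Y : Finset α} (hX : X ⊆ M) (hY : Y ⊆ M) :
    ρ (X ∪ Y) + f (X ∩ Y) ≤ ρ Y + f X := by
  have hXY : X ∩ Y ⊆ X ∩ (Y ∪ S) := Finset.inter_subset_inter_left Finset.subset_union_left
  rcases eq_add_or_exists_mem d hne hf h𝓜 hS hY with h | ⟨W, hW, hYW, h⟩
  · have hYS : Y ∪ S ⊆ M := Finset.union_subset hY hS
    have : ρ (X ∪ Y) ≤ _ := le_add hf (Finset.union_assoc X Y S).subset (Finset.union_subset hX hYS)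
    linarith [hf.submod_of_subset_inter hX hYS hXY]
  · have hWM := h𝓜.subset_ground hW
    have : ρ (X ∪ Y) ≤ _ := le_of_mem hf h𝓜 hW ((Finset.union_assoc X Y S).trans_subset
      (Finset.union_subset_union_right hYW)) Finset.subset_union_right (Finset.union_subset hX hWM)
    linarith [hf.submod_of_subset_inter hX hWM (hXY.trans (Finset.inter_subset_inter_left hYW))]

theorem submod_of_eq_add {X Y : Finset α} (hX : X ⊆ M) (hY : Y ⊆ M)
    (hρX : ρ X = f (X ∪ S) + d) : ρ (X ∪ Y) + ρ (X ∩ Y) ≤ ρ X + ρ Y := by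
  have hXS : X ∪ S ⊆ M := Finset.union_subset hX hS
  have hinter : ρ (X ∩ Y) ≤ f ((X ∩ Y) ∪ S) + d :=
    le_add hf le_rfl (Finset.union_subset (Finset.inter_subset_left.trans hX) hS)
  have hXYS : X ∩ Y ∪ S ⊆ X ∪ S := Finset.union_subset_union_left Finset.inter_subset_left
  rcases eq_add_or_exists_mem d hne hf h𝓜 hS hY with hρY | ⟨W, hW, hYW, hρY⟩
  · have hYS : Y ∪ S ⊆ M := Finset.union_subset hY hS
    have hunion : ρ (X ∪ Y) ≤ f ((X ∪ S) ∪ (Y ∪ S)) + d :=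
      le_add hf (Finset.union_union_distrib_right X Y S).subset (Finset.union_subset hXS hYS)
    linarith [hf.submod_of_subset_inter hXS hYS (Finset.subset_inter hXYS
      (Finset.union_subset_union_left Finset.inter_subset_right))]
  · have hWM := h𝓜.subset_ground hW
    have hunion : ρ (X ∪ Y) ≤ f ((X ∪ S) ∪ W) :=
      le_of_mem hf h𝓜 hW ((Finset.union_union_distrib_right X Y S).trans_subset
        (Finset.union_subset_union_right hYW)) Finset.subset_union_right
        (Finset.union_subset hXS hWM)
    linarith [hf.submod_of_subset_inter hXS hWM (Finset.subset_inter hXYS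
      ((Finset.union_subset_union_left Finset.inter_subset_right).trans hYW))]

theorem submod (hd : ∀ G₁ ∈ 𝓜, ∀ G₂ ∈ 𝓜, G₁ ∩ G₂ ∉ 𝓜 → d ≤ modularDefect f G₁ G₂)
    {X Y : Finset α} (hX : X ⊆ M) (hY : Y ⊆ M) : ρ (X ∪ Y) + ρ (X ∩ Y) ≤ ρ X + ρ Y := by
  rcases eq_add_or_exists_mem d hne hf h𝓜 hS hX with hρX | ⟨V, hV, hXV, hρX⟩
  · exact submod_of_eq_add hf h𝓜 hS hX hY hρX
  rcases eq_add_or_exists_mem d hne hf h𝓜 hS hY with hρY | ⟨W, hW, hYW, hρY⟩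
  · have := submod_of_eq_add hf h𝓜 hS hY hX hρY
    rwa [Finset.union_comm, Finset.inter_comm, add_comm (ρ Y)] at this
  · exact submod_of_mem hf h𝓜 hd hV hXV hρX hW hYW hρY

theorem eq_of_mem (hd : 0 ≤ d) {F X : Finset α} (hF : F ∈ 𝓜) (hFX : F ⊆ X) (hSX : S ⊆ X)
    (hX : X ⊆ M) : ρ X = f X :=
  (le_of_mem hf h𝓜 hF (Finset.union_subset le_rfl hSX) hFX hX).antisymm (rank_le hf h𝓜 hS hd hX)

variable (hsep : ∀ W ∈ 𝓜, S ⊆ W → f S + d < f W)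
include hsep

theorem base_eq : ρ S = f S + d := by
  have hle : ρ S ≤ f S + d := le_add hf (Finset.union_self S).subset hS
  rcases eq_add_or_exists_mem d hne hf h𝓜 hS hS with h | ⟨W, hW, hSW, h⟩
  · rwa [Finset.union_self] at h
  · linarith [hsep W hW (Finset.subset_union_right.trans hSW)]

theorem add_lt_two_mul (hd : 0 < d) {X : Finset α} (hX : X ⊆ M) : f X + (f S + d) < 2 * ρ X := by
  rcases eq_add_or_exists_mem d hne hf h𝓜 hS hX with h | ⟨W, hW, hXW, h⟩
  · have hXS := Finset.union_subset hX hS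
    linarith [hf.mono Finset.subset_union_left hXS (A := X),
      hf.mono Finset.subset_union_right hXS (A := S)]
  · linarith [hf.mono (Finset.subset_union_left.trans hXW) (h𝓜.subset_ground hW),
      hsep W hW (Finset.subset_union_right.trans hXW)]

theorem exists_pos_le (hd : 0 < d) : ∃ ε > 0, ∀ X ⊆ M, ε ≤ 2 * ρ X - f X - (f S + d) := by
  obtain ⟨X₀, hX₀, hmin⟩ := M.powerset.exists_min_image
    (fun X => 2 * ρ X - f X - (f S + d)) ⟨∅, Finset.empty_mem_powerset M⟩
  exact ⟨_, by linarith [add_lt_two_mul hf h𝓜 hS hsep hd (Finset.mem_powerset.1 hX₀) (hne := hne)],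
    fun X hX => hmin X (Finset.mem_powerset.2 hX)⟩

end cutExtRank

noncomputable def twoPointExt (M : Finset α) (f g : Finset α → ℝ) (c : ℝ) (u v : α)
    (A : Finset α) : ℝ :=
  if u ∈ A ∧ v ∈ A then c else if u ∈ A ∨ v ∈ A then g (A ∩ M) else f (A ∩ M)

section twoPointExt

variable {g : Finset α → ℝ} {c : ℝ} {u v : α}

theorem isPolymatroid_twoPointExt (hf : IsPolymatroid M f)
    (hg_mono : ∀ X Y, X ⊆ Y → Y ⊆ M → g X ≤ g Y)
    (hg_submod : ∀ X Y, X ⊆ M → Y ⊆ M → g (X ∪ Y) + g (X ∩ Y) ≤ g X + g Y)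
    (hfg_submod : ∀ X Y, X ⊆ M → Y ⊆ M → g (X ∪ Y) + f (X ∩ Y) ≤ g Y + f X)
    (hfg : ∀ X ⊆ M, f X ≤ g X) (hgc : ∀ X ⊆ M, g X ≤ c)
    (hc : ∀ X Y, X ⊆ M → Y ⊆ M → c + f (X ∩ Y) ≤ g X + g Y) :
    IsPolymatroid (insert u (insert v M)) (twoPointExt M f g c u v) := by
  have hM : ∀ A : Finset α, A ∩ M ⊆ M := fun A => Finset.inter_subset_right
  refine ⟨by simp [twoPointExt, hf.1], fun A _ => ?_, fun A B hAB _ => ?_, fun A B _ _ => ?_⟩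
  · have := hf.nonneg (hM A)
    have := hfg _ (hM A)
    have := hgc _ (hM A)
    unfold twoPointExt
    split_ifs <;> linarith
  · have hXY : A ∩ M ⊆ B ∩ M := Finset.inter_subset_inter_right hAB
    have hu : u ∈ A → u ∈ B := fun h => hAB h
    have hv : v ∈ A → v ∈ B := fun h => hAB h
    have := hf.mono hXY (hM B)
    have := hg_mono _ _ hXY (hM B)
    have := hfg _ (hM B)
    have := hgc _ (hM A)
    have := hgc _ (hM B)
    unfold twoPointExt
    split_ifs <;> first | linarith | tauto
  · set X := A ∩ M
    set Y := B ∩ M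
    have hX : X ⊆ M := hM A
    have hY : Y ⊆ M := hM B
    have hunion : (A ∪ B) ∩ M = X ∪ Y := Finset.union_inter_distrib_right A B M
    have hinter : (A ∩ B) ∩ M = X ∩ Y := Finset.inter_inter_distrib_right A B M
    have hcross := hfg_submod Y X hY hX
    rw [Finset.union_comm, Finset.inter_comm] at hcross
    have := hfg_submod X Y hX hY
    have := hf.submod hX hY
    have := hg_submod X Y hX hY
    have := hc X Y hX hY
    have := hg_mono (X ∩ Y) X Finset.inter_subset_left hX
    have := hg_mono (X ∩ Y) Y Finset.inter_subset_right hY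
    have := hf.mono (Finset.inter_subset_left : X ∩ Y ⊆ X) hX
    have := hf.mono (Finset.inter_subset_right : X ∩ Y ⊆ Y) hY
    by_cases huA : u ∈ A <;> by_cases hvA : v ∈ A <;> by_cases huB : u ∈ B <;>
      by_cases hvB : v ∈ B <;>
      simp only [twoPointExt, hunion, hinter, Finset.mem_union, Finset.mem_inter, huA, hvA, huB,
        hvB, and_self, and_true, and_false, or_self, or_true,
        or_false, if_true, if_false] <;> linarith

variable (hu : u ∉ M) (hv : v ∉ M)
include hu hv

theorem twoPointExt_of_subset {A : Finset α} (hA : A ⊆ M) : twoPointExt M f g c u v A = f A := by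
  rw [twoPointExt, if_neg fun h => hu (hA h.1), if_neg fun h => h.elim (hu ∘ @hA u) (hv ∘ @hA v),
    Finset.inter_eq_left.2 hA]

theorem twoPointExt_singleton_union (huv : u ≠ v) {w : α} (hw : w = u ∨ w = v) {Z : Finset α}
    (hZ : Z ⊆ M) : twoPointExt M f g c u v ({w} ∪ Z) = g Z := by
  have hZu : u ∉ Z := fun h => hu (hZ h)
  have hZv : v ∉ Z := fun h => hv (hZ h)
  have hwM : w ∉ M := by rcases hw with rfl | rfl <;> assumption
  rw [twoPointExt, Finset.union_inter_distrib_right, Finset.singleton_inter_of_notMem hwM,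
    Finset.empty_union, Finset.inter_eq_left.2 hZ]
  rcases hw with rfl | rfl <;> simp [huv, huv.symm, hZu, hZv]

theorem ingExprCond_twoPointExt (huv : u ≠ v) {A B S : Finset α} (hA : A ⊆ M) (hB : B ⊆ M)
    (hS : S ⊆ M) : ingExprCond (twoPointExt M f g c u v) A B {u} {v} S =
      -condMI f A B S + 2 * condMI g A B S + (2 * g S - f S - c) := by
  have hsingle : ∀ Z ⊆ M, twoPointExt M f g c u v ({u} ∪ Z) = g Z ∧
      twoPointExt M f g c u v ({v} ∪ Z) = g Z := fun Z hZ =>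
    ⟨twoPointExt_singleton_union hu hv huv (Or.inl rfl) hZ,
      twoPointExt_singleton_union hu hv huv (Or.inr rfl) hZ⟩
  have hboth : twoPointExt M f g c u v ({u} ∪ {v} ∪ S) = c := by
    simp [twoPointExt]
  have hAS := Finset.union_subset hA hS
  have hBS := Finset.union_subset hB hS
  have hABS := Finset.union_subset (Finset.union_subset hA hB) hS
  simp only [ingExprCond, condMI, Finset.union_left_comm _ {u}, Finset.union_left_comm _ {v},
    (hsingle _ hS).1, (hsingle _ hS).2, (hsingle _ hAS).1, (hsingle _ hAS).2, (hsingle _ hBS).1,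
    (hsingle _ hBS).2, (hsingle _ hABS).1, (hsingle _ hABS).2, hboth,
    twoPointExt_of_subset hu hv hS, twoPointExt_of_subset hu hv hAS,
    twoPointExt_of_subset hu hv hBS, twoPointExt_of_subset hu hv hABS]
  ring

end twoPointExt

theorem condMI_inter_eq_modularDefect (f : Finset α → ℝ) (A B : Finset α) :
    condMI f A B (A ∩ B) = modularDefect f A B := by
  rw [condMI, modularDefect, Finset.union_eq_left.2 Finset.inter_subset_left,
    Finset.union_eq_left.2 Finset.inter_subset_right,
    Finset.union_eq_left.2 (Finset.inter_subset_left.trans Finset.subset_union_left)]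

theorem modularDefect_const_add (g : Finset α → ℝ) (a : ℝ) (A B : Finset α) :
    modularDefect (fun X => a + g X) A B = modularDefect g A B := by
  simp only [modularDefect]
  ring

namespace cutExtRank

variable {𝓜 : Set (Finset α)} {S : Finset α} {d ε : ℝ} {hne : (cutFamily M 𝓜).Nonempty}
  {u v : α}

local notation "ρ" => cutExtRank M f 𝓜 S d hne

/-- Shifting `ρ` by `f M` makes the rank of a set containing both new points dominate every
single-point rank; the bound on `ε` is then exactly submodularity of `X ∪ {u}` and `Y ∪ {v}`. -/
theorem isPolymatroid_twoPointExt (hf : IsPolymatroid M f) (h𝓜 : IsModularCut M f 𝓜)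
    (hS : S ⊆ M) (hd₀ : 0 ≤ d)
    (hd : ∀ G₁ ∈ 𝓜, ∀ G₂ ∈ 𝓜, G₁ ∩ G₂ ∉ 𝓜 → d ≤ modularDefect f G₁ G₂) (hε : 0 ≤ ε)
    (hεle : ∀ X ⊆ M, ε ≤ 2 * ρ X - f X - (f S + d)) :
    IsPolymatroid (insert u (insert v M))
      (twoPointExt M f (fun X => f M + ρ X) (2 * f M + (f S + d) + ε) u v) := by
  refine _root_.isPolymatroid_twoPointExt hf (fun X Y hXY hY => ?_) (fun X Y hX hY => ?_)
    (fun X Y hX hY => ?_) (fun X hX => ?_) (fun X hX => ?_) (fun X Y hX hY => ?_)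
  · linarith [mono hf h𝓜 hS hXY hY (d := d) (hne := hne)]
  · linarith [submod hf h𝓜 hS hd hX hY (d := d) (hne := hne)]
  · linarith [union_add_rank_inter_le hf h𝓜 hS hX hY (d := d) (hne := hne)]
  · linarith [rank_le hf h𝓜 hS hd₀ hX (hne := hne), hf.nonneg (le_refl M)]
  · have : ρ X ≤ f M + d := le_add hf (Finset.union_subset hX hS) le_rfl
    linarith [hf.nonneg hS]
  · have hXY : X ∩ Y ⊆ M := Finset.inter_subset_left.trans hX
    have hX' : ρ (X ∩ Y) ≤ ρ X := mono hf h𝓜 hS Finset.inter_subset_left hX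
    have hY' : ρ (X ∩ Y) ≤ ρ Y := mono hf h𝓜 hS Finset.inter_subset_right hY
    linarith [hεle _ hXY]

theorem modularDefect_eq_zero (hf : IsPolymatroid M f) (h𝓜 : IsModularCut M f 𝓜)
    {F₁ F₂ : Finset α} (hF₁ : F₁ ∈ 𝓜) (hF₂ : F₂ ∈ 𝓜)
    (hsep : ∀ W ∈ 𝓜, F₁ ∩ F₂ ⊆ W → f (F₁ ∩ F₂) + modularDefect f F₁ F₂ < f W) :
    modularDefect (cutExtRank M f 𝓜 (F₁ ∩ F₂) (modularDefect f F₁ F₂) hne) F₁ F₂ = 0 := by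
  have hF₁M := h𝓜.subset_ground hF₁
  have hF₂M := h𝓜.subset_ground hF₂
  have hSM : F₁ ∩ F₂ ⊆ M := Finset.inter_subset_left.trans hF₁M
  have hd : 0 ≤ modularDefect f F₁ F₂ := by
    rw [modularDefect]
    linarith [hf.submod hF₁M hF₂M]
  rw [modularDefect, base_eq hf h𝓜 hSM hsep,
    eq_of_mem hf h𝓜 hSM hd hF₁ le_rfl Finset.inter_subset_left hF₁M,
    eq_of_mem hf h𝓜 hSM hd hF₂ le_rfl Finset.inter_subset_right hF₂M,
    eq_of_mem hf h𝓜 hSM hd hF₁ Finset.subset_union_left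
      (Finset.inter_subset_left.trans Finset.subset_union_left) (Finset.union_subset hF₁M hF₂M),
    modularDefect]
  ring

end cutExtRank

end

theorem statement_17_general {α : Type*} [DecidableEq α] [Infinite α]
    (M : Finset α) (f : Finset α → ℝ) (hf : IsPolymatroid M f)
    (F₁ F₂ : Finset α)
    (𝓜 : Set (Finset α)) (h𝓜 : IsModularCut M f 𝓜)
    (hF₁mem : F₁ ∈ 𝓜) (hF₂mem : F₂ ∈ 𝓜)
    (hS : F₁ ∩ F₂ ∉ 𝓜)
    (hδpos : 0 < modularDefect f F₁ F₂)
    (hmin : ∀ G₁ ∈ 𝓜, ∀ G₂ ∈ 𝓜, G₁ ∩ G₂ ∉ 𝓜 →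
      modularDefect f F₁ F₂ ≤ modularDefect f G₁ G₂) :
    ∃ u v : α, u ≠ v ∧ u ∉ M ∧ v ∉ M ∧ ∃ f₂ : Finset α → ℝ,
      IsPolymatroid (insert u (insert v M)) f₂ ∧
      (∀ A, A ⊆ M → f₂ A = f A) ∧
      ingExprCond f₂ F₁ F₂ {u} {v} (F₁ ∩ F₂) < 0 := by
  obtain ⟨u, hu⟩ := Infinite.exists_notMem_finset M
  obtain ⟨v, hv⟩ := Infinite.exists_notMem_finset (insert u M)
  rw [Finset.mem_insert, not_or] at hv
  have hF₁M := h𝓜.subset_ground hF₁mem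
  have hF₂M := h𝓜.subset_ground hF₂mem
  have hSM : F₁ ∩ F₂ ⊆ M := Finset.inter_subset_left.trans hF₁M
  have hne : (cutFamily M 𝓜).Nonempty :=
    ⟨F₁, Finset.mem_filter.2 ⟨Finset.mem_powerset.2 hF₁M, hF₁mem⟩⟩
  have hsep : ∀ W ∈ 𝓜, F₁ ∩ F₂ ⊆ W → f (F₁ ∩ F₂) + modularDefect f F₁ F₂ < f W :=
    fun W hW => h𝓜.rank_add_lt_of_inter_subset hmin hf hF₁mem hF₂mem hS hW
  obtain ⟨ε, hε, hεle⟩ := cutExtRank.exists_pos_le hf h𝓜 hSM hsep hδpos (hne := hne)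
  refine ⟨u, v, Ne.symm hv.1, hu, hv.2, _,
    cutExtRank.isPolymatroid_twoPointExt hf h𝓜 hSM hδpos.le hmin hε.le hεle,
    fun A hA => twoPointExt_of_subset hu hv.2 hA, ?_⟩
  rw [ingExprCond_twoPointExt hu hv.2 (Ne.symm hv.1) hF₁M hF₂M hSM, condMI_inter_eq_modularDefect,
    condMI_inter_eq_modularDefect, modularDefect_const_add,
    cutExtRank.modularDefect_eq_zero hf h𝓜 hF₁mem hF₂mem hsep, cutExtRank.base_eq hf h𝓜 hSM hsep]
  linarith

/-- Let `F₁, F₂` be flats generating the modular cut `𝓜`, let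
`S = F₁ ∩ F₂ ∉ 𝓜`, and suppose `δ(F₁,F₂) = δ(𝓜) > 0`.  Then `(f, M)` has a
two-point extension `(f₂, M ∪ {u,v})` which is Ingleton-violating on this
configuration: `Ing_{f₂}(F₁, F₂; {u}, {v} | S) < 0`. -/
theorem statement_17 {α : Type*} [DecidableEq α] [Infinite α]
    (M : Finset α) (f : Finset α → ℝ) (hf : IsPolymatroid M f)
    (F₁ F₂ : Finset α) (hF₁ : IsFlat M f F₁) (hF₂ : IsFlat M f F₂)
    (𝓜 : Set (Finset α)) (h𝓜 : IsModularCut M f 𝓜)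
    (hF₁mem : F₁ ∈ 𝓜) (hF₂mem : F₂ ∈ 𝓜)
    (hgen : ∀ 𝓝 : Set (Finset α), IsModularCut M f 𝓝 → F₁ ∈ 𝓝 → F₂ ∈ 𝓝 → 𝓜 ⊆ 𝓝)
    (hS : F₁ ∩ F₂ ∉ 𝓜)
    (hδpos : 0 < modularDefect f F₁ F₂)
    (hmin : ∀ G₁ ∈ 𝓜, ∀ G₂ ∈ 𝓜, G₁ ∩ G₂ ∉ 𝓜 →
      modularDefect f F₁ F₂ ≤ modularDefect f G₁ G₂) :
    ∃ u v : α, u ≠ v ∧ u ∉ M ∧ v ∉ M ∧ ∃ f₂ : Finset α → ℝ,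
      IsPolymatroid (insert u (insert v M)) f₂ ∧
      (∀ A, A ⊆ M → f₂ A = f A) ∧
      ingExprCond f₂ F₁ F₂ {u} {v} (F₁ ∩ F₂) < 0 :=
  statement_17_general M f hf F₁ F₂ 𝓜 h𝓜 hF₁mem hF₂mem hS hδpos hmin
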